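/- Let τ be a tracial functional on A. If P, Q ∈ Aⁿ are both divergence-free for τ, then the bracket {P,Q} is divergence-free for τ. Hence the divergence-free vector fields form a Lie subalgebra of (Aⁿ, {·,·}). -/
import Mathlib


open scoped TensorProduct

noncomputable section

/-- The free algebra `A = ℂ⟨X₁,…,Xₙ⟩` on `n` generators. -/
abbrev FA (n : ℕ) := FreeAlgebra ℂ (Fin n)

/-- The generator `X i`. -/
def X {n : ℕ} (i : Fin n) : FA n := FreeAlgebra.ι ℂ i

/-- The monomial `X_{i₁} ⋯ X_{i_m}` associated to a list of indices. -/
def mono {n : ℕ} (l : List (Fin n)) : FA n := (l.map X).prod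

lemma mono_nil {n : ℕ} : mono ([] : List (Fin n)) = 1 := rfl

lemma mono_cons {n : ℕ} (a : Fin n) (l : List (Fin n)) : mono (a :: l) = X a * mono l := by
  simp [mono]

lemma mono_append {n : ℕ} (l l' : List (Fin n)) : mono (l ++ l') = mono l * mono l' := by
  simp [mono]

lemma span_mono {n : ℕ} : Submodule.span ℂ (Set.range (mono (n := n))) = ⊤ := by
  rw [eq_top_iff]
  intro x _
  induction x using FreeAlgebra.induction with
  | grade0 r =>
      have : (algebraMap ℂ (FA n)) r = r • mono [] := by
        simp [mono_nil, Algebra.algebraMap_eq_smul_one]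
      rw [this]
      exact Submodule.smul_mem _ _ (Submodule.subset_span ⟨[], rfl⟩)
  | grade1 i => exact Submodule.subset_span ⟨[i], by simp [mono_cons, mono_nil, X]⟩
  | mul a b ha hb =>
      have h := Submodule.mul_mem_mul (ha trivial) (hb trivial)
      rw [Submodule.span_mul_span] at h
      refine Submodule.span_le.mpr ?_ h
      rintro z hz
      rw [Set.mem_mul] at hz
      obtain ⟨u, ⟨lu, rfl⟩, v, ⟨lv, rfl⟩, rfl⟩ := hz
      exact Submodule.subset_span ⟨lu ++ lv, mono_append _ _⟩
  | add a b ha hb => exact Submodule.add_mem _ (ha trivial) (hb trivial)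

lemma hext {n : ℕ} {M : Type} [AddCommMonoid M] [Module ℂ M] (f g : FA n →ₗ[ℂ] M)
    (h : ∀ l, f (mono l) = g (mono l)) : f = g := by
  apply LinearMap.ext
  intro x
  have hx : x ∈ Submodule.span ℂ (Set.range (mono (n := n))) := by rw [span_mono]; trivial
  induction hx using Submodule.span_induction with
  | mem x hx => obtain ⟨l, rfl⟩ := hx; exact h l
  | zero => simp
  | add _ _ _ _ h1 h2 => simp [h1, h2]
  | smul _ _ _ h1 => simp [h1]

section Der
variable {n : ℕ} (D : (Fin n → FA n) → (FA n →ₗ[ℂ] FA n))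
  (hD : ∀ (b : Fin n → FA n) (l : List (Fin n)),
      D b (mono l) = ∑ k : Fin l.length,
        mono (l.take k.val) * b (l.get k) * mono (l.drop (k.val + 1)))

include hD

lemma D_one (b : Fin n → FA n) : D b 1 = 0 := by
  have := hD b []
  simpa [mono_nil] using this

lemma D_cons (b : Fin n → FA n) (a : Fin n) (l : List (Fin n)) :
    D b (mono (a :: l)) = b a * mono l + X a * D b (mono l) := by
  rw [hD b (a :: l)]
  rw [show (∑ k : Fin ((a :: l).length),
        mono ((a :: l).take k.val) * b ((a :: l).get k) * mono ((a :: l).drop (k.val + 1))) = _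
      from Fin.sum_univ_succ _]
  rw [hD b l, Finset.mul_sum]
  simp [mono_cons, mono_nil, mul_assoc]

lemma D_X (b : Fin n → FA n) (i : Fin n) : D b (X i) = b i := by
  have := D_cons D hD b i []
  simpa [mono_nil, mono_cons, D_one D hD] using this

lemma leibniz_mono (b : Fin n → FA n) (l l' : List (Fin n)) :
    D b (mono l * mono l') = D b (mono l) * mono l' + mono l * D b (mono l') := by
  induction l with
  | nil => simp [mono_nil, D_one D hD]
  | cons a t ih =>
      have h1 : mono (a :: t) * mono l' = mono (a :: (t ++ l')) := by
        rw [← mono_append]; rfl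
      rw [h1, D_cons D hD, mono_append, ih, D_cons D hD, mono_cons]
      noncomm_ring

lemma leibniz (b : Fin n → FA n) (x y : FA n) :
    D b (x * y) = D b x * y + x * D b y := by
  -- first fix x = mono l, vary y
  have step1 : ∀ (l : List (Fin n)) (y : FA n),
      D b (mono l * y) = D b (mono l) * y + mono l * D b y := by
    intro l
    have := hext ((D b) ∘ₗ LinearMap.mulLeft ℂ (mono l))
      (LinearMap.mulLeft ℂ (D b (mono l)) + (LinearMap.mulLeft ℂ (mono l)) ∘ₗ D b)
      (fun l' => by simpa using leibniz_mono D hD b l l')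
    intro y
    simpa using LinearMap.congr_fun this y
  have := hext ((D b) ∘ₗ LinearMap.mulRight ℂ y)
    ((LinearMap.mulRight ℂ y) ∘ₗ D b + LinearMap.mulRight ℂ (D b y))
    (fun l => by simpa using step1 l y)
  simpa using LinearMap.congr_fun this x

lemma D_bracket (P Q : Fin n → FA n) :
    D (fun j => D P (Q j) - D Q (P j)) = (D P) ∘ₗ (D Q) - (D Q) ∘ₗ (D P) := by
  apply hext
  intro l
  induction l with
  | nil => simp [mono_nil, D_one D hD]
  | cons a t ih =>
      rw [D_cons D hD]
      simp only [LinearMap.sub_apply, LinearMap.comp_apply] at ih ⊢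
      rw [D_cons D hD Q a t, D_cons D hD P a t, map_add, map_add,
        leibniz D hD P (Q a) (mono t), leibniz D hD Q (P a) (mono t),
        leibniz D hD P (X a) _, leibniz D hD Q (X a) _,
        D_X D hD, D_X D hD, ih]
      noncomm_ring

end Der

section Trace
variable {n : ℕ}
  (τ : FA n →ₗ[ℂ] ℂ) (htr : ∀ P Q : FA n, τ (P * Q) = τ (Q * P))
  (δ : Fin n → (FA n →ₗ[ℂ] FA n))
  (hδ : ∀ (j : Fin n) (l : List (Fin n)),
      δ j (mono l) = ∑ k : Fin l.length,
        if l.get k = j then mono (l.drop (k.val + 1)) * mono (l.take k.val) else 0)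
  (D : (Fin n → FA n) → (FA n →ₗ[ℂ] FA n))
  (hD : ∀ (b : Fin n → FA n) (l : List (Fin n)),
      D b (mono l) = ∑ k : Fin l.length,
        mono (l.take k.val) * b (l.get k) * mono (l.drop (k.val + 1)))

include htr hδ hD

lemma trace_div (c : Fin n → FA n) (R : FA n) :
    ∑ j : Fin n, τ (c j * δ j R) = τ (D c R) := by
  have h := hext (∑ j : Fin n, τ ∘ₗ LinearMap.mulLeft ℂ (c j) ∘ₗ δ j) (τ ∘ₗ D c) ?_
  · simpa using LinearMap.congr_fun h R
  intro l
  simp only [LinearMap.sum_apply, LinearMap.comp_apply, LinearMap.mulLeft_apply]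
  rw [hD c l]
  simp only [hδ, Finset.mul_sum, mul_ite, mul_zero, map_sum, apply_ite τ, map_zero]
  rw [Finset.sum_comm]
  refine Finset.sum_congr rfl fun k _ => ?_
  rw [Finset.sum_ite_eq]
  simp only [Finset.mem_univ, if_true]
  rw [← mul_assoc, htr, ← mul_assoc]

end Trace

/-- if `P, Q ∈ Aⁿ` are divergence-free for a tracial functional `τ`, then so is
the bracket `{P,Q} = (D_P Q_j − D_Q P_j)_j`; hence the divergence-free vector fields form a
Lie subalgebra of `(Aⁿ, {·,·})`. -/
theorem stmt9 {n : ℕ} (hn : 1 ≤ n)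
    (τ : FA n →ₗ[ℂ] ℂ) (htr : ∀ P Q : FA n, τ (P * Q) = τ (Q * P))
    (δ : Fin n → (FA n →ₗ[ℂ] FA n))
    (hδ : ∀ (j : Fin n) (l : List (Fin n)),
      δ j (mono l) = ∑ k : Fin l.length,
        if l.get k = j then mono (l.drop (k.val + 1)) * mono (l.take k.val) else 0)
    (D : (Fin n → FA n) → (FA n →ₗ[ℂ] FA n))
    (hD : ∀ (b : Fin n → FA n) (l : List (Fin n)),
      D b (mono l) = ∑ k : Fin l.length,
        mono (l.take k.val) * b (l.get k) * mono (l.drop (k.val + 1)))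
    (P Q : Fin n → FA n)
    (hP : ∀ R : FA n, ∑ j : Fin n, τ (P j * δ j R) = 0)
    (hQ : ∀ R : FA n, ∑ j : Fin n, τ (Q j * δ j R) = 0) :
    ∀ R : FA n, ∑ j : Fin n, τ ((D P (Q j) - D Q (P j)) * δ j R) = 0 := by
  intro R
  rw [trace_div τ htr δ hδ D hD (fun j => D P (Q j) - D Q (P j)) R,
    D_bracket D hD P Q]
  simp only [LinearMap.sub_apply, LinearMap.comp_apply, map_sub]
  rw [← trace_div τ htr δ hδ D hD P (D Q R), ← trace_div τ htr δ hδ D hD Q (D P R),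
    hP, hQ, sub_zero]
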